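/- arXiv:1508.01293 — 5 statements merged into one kernel-verified Lean document; each statement's English description precedes it below -/
import Mathlib

section
/- With the hypotheses of lemma on Frobenius eigenvalues (g ≥ 3, full Weyl group (ℤ/2ℤ)^g ⋊ S_g), let n be an odd positive integer, N a positive integer, and j: {1,…,2n} → {1,…,2g} an injective function. Then ∏_{i=1}^n μ_{j(i)}^N ≠ ∏_{i=n+1}^{2n} μ_{j(i)}^N. -/
/-!
As `n` is odd, the indices on the left are not closed under the pairing `i ↦ Fin.rev i`, so some
left index `x` has its partner `x'` off the left. Transporting the relation by the transposition
`(x x')`, which commutes with the pairing, gives `μ x ^ (2N) = μ x' ^ (2N)`, hence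
`μ x ^ (4N) = q ^ (2N)`; since signed permutations act transitively, every `μ i` satisfies this.
So all `μ i` are conjugates lying in `ℚ(√q, μ_{4N})`, an abelian extension of `ℚ`, and are therefore
polynomials in each other: `μ b = f (μ a)`. A signed permutation fixing `a` and moving `b` to an
index `c` of a third pair turns this into `μ c = f (μ a) = μ b`, contradicting injectivity.
-/

open Equiv Function

namespace Finset

variable {ι M : Type*} [DecidableEq ι]

theorem prod_comp_swap_mul_of_mem_of_notMem [CommMonoid M] (f : ι → M) {s : Finset ι}
    {a b : ι} (ha : a ∈ s) (hb : b ∉ s) :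
    (∏ y ∈ s, f (swap a b y)) * f a = (∏ y ∈ s, f y) * f b := by
  have hrest : ∏ y ∈ s.erase a, f (swap a b y) = ∏ y ∈ s.erase a, f y :=
    prod_congr rfl fun y hy => by
      rw [swap_apply_of_ne_of_ne (ne_of_mem_erase hy)
        (ne_of_mem_of_not_mem (mem_of_mem_erase hy) hb)]
  rw [← mul_prod_erase s _ ha, ← mul_prod_erase s f ha, hrest, swap_apply_left]
  ac_rfl

theorem prod_comp_swap_of_notMem [CommMonoid M] (f : ι → M) {s : Finset ι}
    {a b : ι} (ha : a ∉ s) (hb : b ∉ s) : ∏ y ∈ s, f (swap a b y) = ∏ y ∈ s, f y :=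
  prod_congr rfl fun y hy => by
    rw [swap_apply_of_ne_of_ne (ne_of_mem_of_not_mem hy ha) (ne_of_mem_of_not_mem hy hb)]

theorem sq_eq_sq_of_prod_eq_of_prod_comp_swap_eq [CommRing M] [IsDomain M] {f : ι → M}
    (hf : ∀ i, f i ≠ 0) {A B : Finset ι} {a b : ι} (haA : a ∈ A) (hbA : b ∉ A) (haB : a ∉ B)
    (h : ∏ y ∈ A, f y = ∏ y ∈ B, f y)
    (hswap : ∏ y ∈ A, f (swap a b y) = ∏ y ∈ B, f (swap a b y)) : f a ^ 2 = f b ^ 2 := by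
  have hA := prod_comp_swap_mul_of_mem_of_notMem f haA hbA
  by_cases hbB : b ∈ B
  · have hB := prod_comp_swap_mul_of_mem_of_notMem f hbB haB
    rw [swap_comm, ← hswap, ← h] at hB
    have hQ : ∏ y ∈ A, f (swap a b y) ≠ 0 := prod_ne_zero_iff.2 fun y _ => hf _
    exact mul_left_cancel₀ hQ (by linear_combination f a * hA - f b * hB)
  · rw [prod_comp_swap_of_notMem f haB hbB, ← h] at hswap
    rw [hswap] at hA
    rw [mul_left_cancel₀ (prod_ne_zero_iff.2 fun y _ => hf y) hA]

theorem exists_mem_apply_notMem_of_odd_card {r : Perm ι} (hr : Involutive r)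
    (hfix : ∀ i, r i ≠ i) {s : Finset ι} (hs : Odd s.card) : ∃ x ∈ s, r x ∉ s := by
  by_contra! hclosed
  let τ : Perm s := r.subtypePerm fun x => ⟨fun h => hr x ▸ hclosed _ h, hclosed x⟩
  have hτ : τ ^ 2 ^ 1 = 1 := Equiv.ext fun x => Subtype.ext (hr x)
  obtain ⟨x, hx⟩ := Perm.exists_fixed_point_of_prime (p := 2)
    (by simpa [← even_iff_two_dvd] using hs) hτ
  exact hfix x (congrArg Subtype.val hx)

end Finset

namespace Equiv.Perm

variable {ι : Type*} [DecidableEq ι] {r : Perm ι}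

theorem commute_swap_self_apply (hr : Involutive r) (x : ι) :
    Commute (swap x (r x)) r := by
  have := mul_swap_eq_swap_mul r x (r x)
  rw [hr x, swap_comm (r x)] at this
  exact this.symm

theorem commute_swap_mul_swap (hr : Involutive r) (hfix : ∀ i, r i ≠ i) {a b : ι}
    (hab : a ≠ b) (hba : b ≠ r a) : Commute (swap a b * swap (r a) (r b)) r := by
  have hdisj : Commute (swap a b) (swap (r a) (r b)) := by
    refine (disjoint_swap_swap ?_).commute
    have harb : a ≠ r b := fun h => hba (by rw [h, hr])
    simp [hab, harb, hba, (hfix a).symm, (hfix b).symm, r.injective.ne hab]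
  have h1 := mul_swap_eq_swap_mul r a b
  have h2 := mul_swap_eq_swap_mul r (r a) (r b)
  rw [hr a, hr b] at h2
  calc swap a b * swap (r a) (r b) * r = swap (r a) (r b) * (swap a b * r) := by
        rw [← mul_assoc, hdisj.eq]
    _ = r * (swap a b * swap (r a) (r b)) := by rw [← h2, ← mul_assoc, ← h1, mul_assoc]

theorem exists_commute_apply_eq (hr : Involutive r) (hfix : ∀ i, r i ≠ i)
    (x y : ι) : ∃ π : Perm ι, Commute π r ∧ π x = y := by
  by_cases hyx : y = x
  · exact ⟨1, Commute.one_left r, hyx.symm⟩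
  by_cases hyr : y = r x
  · exact ⟨swap x (r x), commute_swap_self_apply hr x, by rw [swap_apply_left, hyr]⟩
  refine ⟨swap x y * swap (r x) (r y), commute_swap_mul_swap hr hfix (Ne.symm hyx) hyr, ?_⟩
  have hxry : x ≠ r y := fun h => hyr (by rw [h, hr])
  rw [mul_apply, swap_apply_of_ne_of_ne (hfix x).symm hxry, swap_apply_left]

end Equiv.Perm

section Relations

open MvPolynomial

def PreservesRelations (R : Type*) {ι A : Type*} [CommSemiring R] [CommSemiring A] [Algebra R A]
    (μ : ι → A) (π : Perm ι) : Prop :=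
  ∀ P : MvPolynomial ι R, aeval μ P = 0 → aeval (μ ∘ π) P = 0

theorem MvPolynomial.aeval_polynomialAeval_X {R ι A : Type*} [CommSemiring R] [CommSemiring A]
    [Algebra R A] (ν : ι → A) (i : ι) (p : Polynomial R) :
    aeval ν (Polynomial.aeval (X i : MvPolynomial ι R) p) = Polynomial.aeval (ν i) p := by
  rw [← Polynomial.aeval_algHom_apply, aeval_X]

namespace PreservesRelations

variable {R ι A : Type*} [CommRing R] [CommRing A] [Algebra R A] {μ : ι → A} {π : Perm ι}

theorem aeval_eq (h : PreservesRelations R μ π) {P Q : MvPolynomial ι R}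
    (hPQ : aeval μ P = aeval μ Q) : aeval (μ ∘ π) P = aeval (μ ∘ π) Q := by
  rw [← sub_eq_zero, ← map_sub] at hPQ ⊢
  exact h _ hPQ

theorem aeval_apply_eq_zero (h : PreservesRelations R μ π) {p : Polynomial R} {i : ι}
    (hp : Polynomial.aeval (μ i) p = 0) : Polynomial.aeval (μ (π i)) p = 0 := by
  simpa only [aeval_polynomialAeval_X, comp_apply] using
    h _ ((aeval_polynomialAeval_X μ i p).trans hp)

theorem apply_eq_aeval (h : PreservesRelations R μ π) {p : Polynomial R} {i j : ι}
    (hp : μ j = Polynomial.aeval (μ i) p) : μ (π j) = Polynomial.aeval (μ (π i)) p := by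
  simpa only [aeval_X, aeval_polynomialAeval_X, comp_apply] using
    h.aeval_eq (P := X j) (Q := Polynomial.aeval (X i) p)
      (by rw [aeval_X, aeval_polynomialAeval_X, hp])

theorem prod_pow_eq (h : PreservesRelations R μ π) {s t : Finset ι} {N : ℕ}
    (hst : ∏ i ∈ s, μ i ^ N = ∏ i ∈ t, μ i ^ N) :
    ∏ i ∈ s, μ (π i) ^ N = ∏ i ∈ t, μ (π i) ^ N := by
  simpa only [map_prod, map_pow, aeval_X, comp_apply] using
    h.aeval_eq (P := ∏ i ∈ s, X i ^ N) (Q := ∏ i ∈ t, X i ^ N)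
      (by simpa only [map_prod, map_pow, aeval_X] using hst)

end PreservesRelations

end Relations

section SignedSymmetry

variable {R ι A : Type*} [CommRing R] [CommRing A] [Algebra R A] [DecidableEq ι]
  {r : Perm ι} (hr : Involutive r) (hfix : ∀ i, r i ≠ i) {μ : ι → A}
  (hsigned : ∀ π : Perm ι, Commute π r → PreservesRelations R μ π)
include hr hfix hsigned

theorem aeval_apply_eq_zero_of_forall_commute (x y : ι) {p : Polynomial R}
    (hp : Polynomial.aeval (μ x) p = 0) : Polynomial.aeval (μ y) p = 0 := by
  obtain ⟨π, hπ, rfl⟩ := Perm.exists_commute_apply_eq hr hfix x y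
  exact (hsigned π hπ).aeval_apply_eq_zero hp

theorem pow_eq_of_prod_pow_eq [IsDomain A] (hμ0 : ∀ i, μ i ≠ 0) {c : R}
    (hpair : ∀ i, μ i * μ (r i) = algebraMap R A c) {s t : Finset ι} (hs : Odd s.card)
    (hst : Disjoint s t) {N : ℕ} (h : ∏ i ∈ s, μ i ^ N = ∏ i ∈ t, μ i ^ N) (y : ι) :
    μ y ^ (2 * (2 * N)) = algebraMap R A c ^ (2 * N) := by
  obtain ⟨x, hxs, hrxs⟩ := s.exists_mem_apply_notMem_of_odd_card hr hfix hs
  have hsq := Finset.sq_eq_sq_of_prod_eq_of_prod_comp_swap_eq (fun i => pow_ne_zero N (hμ0 i))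
    hxs hrxs (Finset.disjoint_left.1 hst hxs) h
    ((hsigned _ (Perm.commute_swap_self_apply hr x)).prod_pow_eq h)
  have hx : μ x ^ (2 * (2 * N)) = algebraMap R A c ^ (2 * N) :=
    calc μ x ^ (2 * (2 * N)) = (μ x ^ N) ^ 2 * (μ x ^ N) ^ 2 := by ring
      _ = (μ x ^ N) ^ 2 * (μ (r x) ^ N) ^ 2 := by rw [← hsq]
      _ = (μ x * μ (r x)) ^ (2 * N) := by ring
      _ = algebraMap R A c ^ (2 * N) := by rw [hpair]
  have hy := aeval_apply_eq_zero_of_forall_commute hr hfix hsigned x y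
    (p := Polynomial.X ^ (2 * (2 * N)) - Polynomial.C (c ^ (2 * N))) (by simp [hx])
  simpa [sub_eq_zero] using hy

theorem aeval_apply_ne_of_forall_commute (hμ : Injective μ) {a b c : ι} (hba : b ≠ a)
    (hbra : b ≠ r a) (hca : c ≠ a) (hcra : c ≠ r a) (hcb : c ≠ b) (hcrb : c ≠ r b)
    (p : Polynomial R) : Polynomial.aeval (μ a) p ≠ μ b := by
  intro h
  have hπ := hsigned _ (Perm.commute_swap_mul_swap hr hfix hcb.symm hcrb)
  have hπa : (swap b c * swap (r b) (r c)) a = a := by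
    have harb : a ≠ r b := fun h => hbra (by rw [h, hr])
    have harc : a ≠ r c := fun h => hcra (by rw [h, hr])
    rw [Perm.mul_apply, swap_apply_of_ne_of_ne harb harc, swap_apply_of_ne_of_ne hba.symm hca.symm]
  have hπb : (swap b c * swap (r b) (r c)) b = c := by
    have hbrc : b ≠ r c := fun h => hcrb (by rw [h, hr])
    rw [Perm.mul_apply, swap_apply_of_ne_of_ne (hfix b).symm hbrc, swap_apply_left]
  have hμc := hπ.apply_eq_aeval h.symm
  rw [hπa, hπb, h] at hμc
  exact hcb (hμ hμc)

end SignedSymmetry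

section AbelianGalois

open Polynomial IntermediateField

variable {K L : Type*} [Field K] [Field L] [Algebra K L]

theorem AlgEquiv.apply_apply_comm_of_sq_eq_algebraMap (σ τ : Gal(L/K)) {x : L} {c : K}
    (hx : x ^ 2 = algebraMap K L c) : σ (τ x) = τ (σ x) := by
  have hsign (ρ : Gal(L/K)) : ρ x = x ∨ ρ x = -x :=
    sq_eq_sq_iff_eq_or_eq_neg.1 (by rw [← map_pow, hx, ρ.commutes])
  rcases hsign σ with hσ | hσ <;> rcases hsign τ with hτ | hτ <;> simp [hσ, hτ]

theorem AlgEquiv.apply_apply_comm_of_pow_eq_one (σ τ : Gal(L/K)) {x : L} {n : ℕ} (hn : n ≠ 0)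
    (hx : x ^ n = 1) : σ (τ x) = τ (σ x) := by
  have : NeZero n := ⟨hn⟩
  have hpow (ρ : Gal(L/K)) : ∃ m : ℕ, ρ x = x ^ m :=
    map_rootsOfUnity_eq_pow_self ρ (rootsOfUnity.mkOfPowEq x hx)
  obtain ⟨a, ha⟩ := hpow σ
  obtain ⟨b, hb⟩ := hpow τ
  rw [hb, map_pow, ha, map_pow, hb, ← pow_mul, ← pow_mul, mul_comm]

theorem exists_aeval_eq_of_aeval_minpoly_eq_zero [IsAbelianGalois K L] {α β : L}
    (h : aeval β (minpoly K α) = 0) : ∃ f : K[X], aeval α f = β := by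
  have hα : IsAlgebraic K α := Algebra.IsAlgebraic.isAlgebraic α
  obtain ⟨σ, rfl⟩ := minpoly.exists_algEquiv_of_root' hα h
  have hmem : σ α ∈ K⟮α⟯ := normal_iff_forall_map_le'.1 inferInstance σ
    ⟨α, mem_adjoin_simple_self K α, rfl⟩
  rw [← mem_toSubalgebra, adjoin_simple_toSubalgebra_of_isAlgebraic hα,
    Algebra.adjoin_singleton_eq_range_aeval] at hmem
  exact hmem

/-- `ℚ(√c, μₙ)` as a subfield of `ℂ`. -/
noncomputable def sqrtCyclotomicField (c : ℚ) (n : ℕ) : IntermediateField ℚ ℂ :=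
  adjoin ℚ (((X ^ 2 - C c) * (X ^ n - 1)).rootSet ℂ)

namespace sqrtCyclotomicField

variable (c : ℚ) (n : ℕ)

instance : IsSplittingField ℚ (sqrtCyclotomicField c n) ((X ^ 2 - C c) * (X ^ n - 1)) :=
  adjoin_rootSet_isSplittingField (IsAlgClosed.splits _)

instance : FiniteDimensional ℚ (sqrtCyclotomicField c n) :=
  IsSplittingField.finiteDimensional _ ((X ^ 2 - C c) * (X ^ n - 1))

instance : IsGalois ℚ (sqrtCyclotomicField c n) where
  to_normal := Normal.of_isSplittingField ((X ^ 2 - C c) * (X ^ n - 1))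

instance : IsAbelianGalois ℚ (sqrtCyclotomicField c n) where
  is_comm := ⟨fun σ τ => by
    refine AlgEquiv.coe_toAlgHom_injective (adjoin_algHom_ext ℚ fun x hx => ?_)
    obtain ⟨hp, hroot⟩ := mem_rootSet.1 hx
    simp only [map_mul, map_sub, map_pow, aeval_X, aeval_C, map_one, mul_eq_zero,
      sub_eq_zero] at hroot
    set y : sqrtCyclotomicField c n := ⟨x, subset_adjoin _ _ hx⟩
    change σ (τ y) = τ (σ y)
    rcases hroot with hsq | hunit
    · exact AlgEquiv.apply_apply_comm_of_sq_eq_algebraMap σ τ (c := c) (Subtype.ext hsq)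
    · refine AlgEquiv.apply_apply_comm_of_pow_eq_one σ τ (n := n) ?_ (Subtype.ext hunit)
      rintro rfl
      simp at hp⟩

variable {c} {m : ℕ}

theorem mem_of_pow_eq (hc : c ≠ 0) (hm : m ≠ 0) {α : ℂ} (hα : α ^ (2 * m) = (c : ℂ) ^ m) :
    α ∈ sqrtCyclotomicField c (2 * m) := by
  have hp : (X ^ 2 - C c) * (X ^ (2 * m) - 1) ≠ 0 :=
    mul_ne_zero (X_pow_sub_C_ne_zero two_pos c)
      (by simpa using X_pow_sub_C_ne_zero (by omega : 0 < 2 * m) (1 : ℚ))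
  have mem_of_root (x : ℂ) (hx : x ^ 2 = c ∨ x ^ (2 * m) = 1) :
      x ∈ sqrtCyclotomicField c (2 * m) := by
    refine subset_adjoin _ _ (mem_rootSet.2 ⟨hp, ?_⟩)
    simp only [map_mul, map_sub, map_pow, aeval_X, aeval_C, map_one, mul_eq_zero, sub_eq_zero]
    exact hx
  obtain ⟨s, hs⟩ := IsAlgClosed.exists_pow_nat_eq (c : ℂ) two_pos
  have hc' : (c : ℂ) ≠ 0 := by exact_mod_cast hc
  have hs0 : s ≠ 0 := by rintro rfl; exact hc' (by simpa using hs.symm)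
  have hunit : (α / s) ^ (2 * m) = 1 := by
    rw [div_pow, pow_mul s, hs, hα, div_self (pow_ne_zero _ hc')]
  rw [← mul_div_cancel₀ α hs0]
  exact mul_mem (mem_of_root s (.inl hs)) (mem_of_root _ (.inr hunit))

end sqrtCyclotomicField

theorem exists_aeval_eq_of_pow_eq {c : ℚ} (hc : c ≠ 0) {m : ℕ} (hm : m ≠ 0) {α β : ℂ}
    (hα : α ^ (2 * m) = (c : ℂ) ^ m) (hβ : β ^ (2 * m) = (c : ℂ) ^ m)
    (h : aeval β (minpoly ℚ α) = 0) : ∃ f : ℚ[X], aeval α f = β := by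
  set E := sqrtCyclotomicField c (2 * m)
  let a : E := ⟨α, sqrtCyclotomicField.mem_of_pow_eq hc hm hα⟩
  let b : E := ⟨β, sqrtCyclotomicField.mem_of_pow_eq hc hm hβ⟩
  have hab : aeval b (minpoly ℚ a) = 0 := by
    apply (algebraMap E ℂ).injective
    rw [← aeval_algebraMap_apply, map_zero, ← minpoly.algebraMap_eq (algebraMap E ℂ).injective a]
    exact h
  obtain ⟨f, hf⟩ := exists_aeval_eq_of_aeval_minpoly_eq_zero hab
  refine ⟨f, ?_⟩
  have := congrArg (algebraMap E ℂ) hf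
  rwa [← aeval_algebraMap_apply] at this

end AbelianGalois

theorem prod_pow_ne_prod_pow_of_forall_commute {ι : Type*} [Fintype ι] [DecidableEq ι]
    {r : Perm ι} (hr : Involutive r) (hfix : ∀ i, r i ≠ i) (hcard : 4 < Fintype.card ι)
    {μ : ι → ℂ} (hμ : Injective μ) {c : ℚ} (hc : c ≠ 0) (hpair : ∀ i, μ i * μ (r i) = c)
    (hsigned : ∀ π : Perm ι, Commute π r → PreservesRelations ℚ μ π)
    {s t : Finset ι} (hs : Odd s.card) (hst : Disjoint s t) {N : ℕ} (hN : N ≠ 0) :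
    ∏ i ∈ s, μ i ^ N ≠ ∏ i ∈ t, μ i ^ N := by
  intro h
  have hμ0 (i : ι) : μ i ≠ 0 := left_ne_zero_of_mul (by rw [hpair]; exact_mod_cast hc)
  have hall := pow_eq_of_prod_pow_eq hr hfix hsigned hμ0 (c := c) hpair hs hst h
  have houtside (a b : ι) : ∃ d, d ∉ ({a, r a, b, r b} : Finset ι) := by
    obtain ⟨d, -, hd⟩ := Finset.exists_mem_notMem_of_card_lt_card
      (Finset.card_le_four.trans_lt (by rwa [Finset.card_univ]) : _ < (Finset.univ : Finset ι).card)
    exact ⟨d, hd⟩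
  obtain ⟨a⟩ : Nonempty ι := Fintype.card_pos_iff.1 (by omega)
  obtain ⟨b, hb⟩ := houtside a a
  obtain ⟨d, hd⟩ := houtside a b
  simp only [Finset.mem_insert, Finset.mem_singleton, not_or] at hb hd
  obtain ⟨f, hf⟩ := exists_aeval_eq_of_pow_eq hc (by omega) (hall a) (hall b)
    (aeval_apply_eq_zero_of_forall_commute hr hfix hsigned a b (minpoly.aeval ℚ (μ a)))
  exact aeval_apply_ne_of_forall_commute hr hfix hsigned hμ hb.1 hb.2.1 hd.1 hd.2.1 hd.2.2.1
    hd.2.2.2 f hf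

theorem frobenius_eigenvalues_no_power_relation_general
    (g : ℕ) (hg : 3 ≤ g) (q : ℕ) (hq : IsPrimePow q)
    (μ : Fin (2*g) → ℂ)
    (hinj : Function.Injective μ)
    (hpair : ∀ i, μ i * μ (Fin.rev i) = (q : ℂ))
    (hgal : ∀ π : Equiv.Perm (Fin (2*g)), (∀ i, π (Fin.rev i) = Fin.rev (π i)) →
      ∀ P : MvPolynomial (Fin (2*g)) ℚ,
        MvPolynomial.aeval μ P = 0 → MvPolynomial.aeval (μ ∘ π) P = 0)
    (n N : ℕ) (hn : Odd n) (hN : 0 < N)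
    (j : Fin (n + n) → Fin (2*g)) (hjinj : Function.Injective j) :
    (∏ i : Fin n, μ (j (Fin.castAdd n i)) ^ N) ≠
      ∏ i : Fin n, μ (j (Fin.natAdd n i)) ^ N := by
  have hfix (i : Fin (2 * g)) : Fin.revPerm i ≠ i := fun h => by
    have := congrArg Fin.val h
    simp only [Fin.revPerm_apply, Fin.val_rev] at this
    omega
  have hdisj : Disjoint (Finset.univ.map ((Fin.castAddEmb n).trans ⟨j, hjinj⟩))
      (Finset.univ.map ((Fin.natAddEmb n).trans ⟨j, hjinj⟩)) := by
    simp only [Finset.disjoint_left, Finset.mem_map, Finset.mem_univ, true_and]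
    rintro _ ⟨a, rfl⟩ ⟨b, hb⟩
    have := congrArg Fin.val (hjinj hb)
    simp only [Fin.natAddEmb_apply, Fin.natAdd_eq_addNat, Fin.val_addNat, Fin.coe_castAddEmb,
      Fin.val_castAdd] at this
    omega
  simpa using prod_pow_ne_prod_pow_of_forall_commute (r := Fin.revPerm) Fin.rev_rev hfix
    (by rw [Fintype.card_fin]; omega) hinj (c := q) (by exact_mod_cast hq.ne_zero) (by simpa using hpair)
    (fun π hπ => hgal π fun i => Perm.ext_iff.1 hπ.eq i) (by simpa using hn) hdisj hN.ne'

/-- With the hypotheses of the Frobenius-eigenvalues lemma, for `n` odd, `N > 0` and an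
injective choice of `2n` indices, the products of `N`-th powers of the first `n` chosen
eigenvalues and of the last `n` chosen eigenvalues are different. -/
theorem frobenius_eigenvalues_no_power_relation
    (g : ℕ) (hg : 3 ≤ g) (q : ℕ) (hq : IsPrimePow q)
    (μ : Fin (2*g) → ℂ)
    (hinj : Function.Injective μ)
    (halg : ∀ i, IsAlgebraic ℚ (μ i))
    (habs : ∀ i, ‖μ i‖ = Real.sqrt q)
    (hpair : ∀ i, μ i * μ (Fin.rev i) = (q : ℂ))
    (hgal : ∀ π : Equiv.Perm (Fin (2*g)), (∀ i, π (Fin.rev i) = Fin.rev (π i)) →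
      ∀ P : MvPolynomial (Fin (2*g)) ℚ,
        MvPolynomial.aeval μ P = 0 → MvPolynomial.aeval (μ ∘ π) P = 0)
    (n N : ℕ) (hn : Odd n) (hnpos : 0 < n) (hN : 0 < N)
    (j : Fin (n + n) → Fin (2*g)) (hjinj : Function.Injective j) :
    (∏ i : Fin n, μ (j (Fin.castAdd n i)) ^ N) ≠
      ∏ i : Fin n, μ (j (Fin.natAdd n i)) ^ N :=
  frobenius_eigenvalues_no_power_relation_general g hg q hq μ hinj hpair hgal n N hn hN j hjinj
end

section
/- With the hypotheses of the Frobenius eigenvalues lemma (g ≥ 3, Galois group (ℤ/2ℤ)^g ⋊ S_g), if λ, ν₁, ν₂ are three distinct roots of f_v(x), then λ² ≠ ν₁ν₂. -/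
/-!
Since the Galois group contains the flip of any single pair `{i, rev i}`, a relation
`λ² = ν₁ν₂` can be transported by a flip that moves exactly one of `ν₁, ν₂` to its partner
and fixes the other two roots; cancelling then identifies two distinct roots. The only
configuration where no such flip exists is `ν₂ = q/ν₁`, and there `λ² = q = λ · (q/λ)`
again identifies `λ` with its partner.
-/

theorem Fin.rev_ne_self_of_two_mul {g : ℕ} (i : Fin (2 * g)) : Fin.rev i ≠ i := by
  intro h
  have := congrArg Fin.val h
  simp only [Fin.val_rev] at this
  omega

lemma ne_zero_of_sq_eq_mul {M : Type*} [MonoidWithZero M] [NoZeroDivisors M] {x y z : M}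
    (h : x ^ 2 = y * z) (hxy : x ≠ y) (hxz : x ≠ z) : x ≠ 0 := by
  rintro rfl
  rcases mul_eq_zero.mp (h.symm.trans (zero_pow two_ne_zero)) with hy | hz
  exacts [hxy hy.symm, hxz hz.symm]

lemma Equiv.swap_apply_comm_of_involutive {ι : Type*} [DecidableEq ι] {r : ι → ι}
    (hr : Function.Involutive r) (i j : ι) :
    Equiv.swap i (r i) (r j) = r (Equiv.swap i (r i) j) := by
  simpa only [hr i, Equiv.swap_comm] using hr.injective.swap_apply i (r i) j

section GaloisFlip

variable {ι R A : Type*} [CommRing R] [CommRing A] [Algebra R A] {μ : ι → A}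

lemma sq_eq_mul_comp_of_aeval_eq_zero {π : ι → ι}
    (hπ : ∀ P : MvPolynomial ι R, MvPolynomial.aeval μ P = 0 → MvPolynomial.aeval (μ ∘ π) P = 0)
    {x y z : ι} (h : μ x ^ 2 = μ y * μ z) : μ (π x) ^ 2 = μ (π y) * μ (π z) := by
  have h0 : MvPolynomial.aeval μ (MvPolynomial.X x ^ 2 - MvPolynomial.X y * MvPolynomial.X z :
      MvPolynomial ι R) = 0 := by
    simp [h]
  simpa [sub_eq_zero] using hπ _ h0

lemma eq_partner_of_sq_eq_mul [DecidableEq ι] [IsDomain A] {r : ι → ι}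
    (hr : Function.Involutive r)
    (hgal : ∀ π : Equiv.Perm ι, (∀ i, π (r i) = r (π i)) →
      ∀ P : MvPolynomial ι R, MvPolynomial.aeval μ P = 0 → MvPolynomial.aeval (μ ∘ π) P = 0)
    {x y z : ι} (h : μ x ^ 2 = μ y * μ z) (hz : μ z ≠ 0)
    (hxy : x ≠ y) (hxy' : x ≠ r y) (hzy : z ≠ y) (hzy' : z ≠ r y) : μ (r y) = μ y := by
  have h' := sq_eq_mul_comp_of_aeval_eq_zero
    (hgal _ (Equiv.swap_apply_comm_of_involutive hr y)) h
  rw [Equiv.swap_apply_of_ne_of_ne hxy hxy', Equiv.swap_apply_of_ne_of_ne hzy hzy',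
    Equiv.swap_apply_left, h] at h'
  exact (mul_right_cancel₀ hz h').symm

end GaloisFlip

theorem frobenius_eigenvalues_no_square_relation_general
    (g : ℕ) (q : ℕ)
    (μ : Fin (2*g) → ℂ)
    (hinj : Function.Injective μ)
    (hpair : ∀ i, μ i * μ (Fin.rev i) = (q : ℂ))
    (hgal : ∀ π : Equiv.Perm (Fin (2*g)), (∀ i, π (Fin.rev i) = Fin.rev (π i)) →
      ∀ P : MvPolynomial (Fin (2*g)) ℚ,
        MvPolynomial.aeval μ P = 0 → MvPolynomial.aeval (μ ∘ π) P = 0)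
    (a b c : Fin (2*g)) (hab : a ≠ b) (hac : a ≠ c) (hbc : b ≠ c) :
    μ a ^ 2 ≠ μ b * μ c := by
  intro h
  have ha : μ a ≠ 0 := ne_zero_of_sq_eq_mul h (hinj.ne hab) (hinj.ne hac)
  obtain ⟨hb, hc⟩ := mul_ne_zero_iff.mp (h ▸ pow_ne_zero 2 ha)
  rcases eq_or_ne c (Fin.rev b) with rfl | hcb
  · have h' : μ a * μ a = μ a * μ (Fin.rev a) := by rw [hpair a, ← hpair b, ← h, sq]
    exact Fin.rev_ne_self_of_two_mul a (hinj (mul_left_cancel₀ ha h')).symm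
  by_cases hab' : a = Fin.rev b
  · subst hab'
    have hac' : Fin.rev b ≠ Fin.rev c := Fin.rev_injective.ne hbc
    have hbc' : b ≠ Fin.rev c := Fin.rev_ne_iff.mp hcb.symm
    have h' : μ (Fin.rev b) ^ 2 = μ c * μ b := by rw [h, mul_comm]
    exact Fin.rev_ne_self_of_two_mul c
      (hinj (eq_partner_of_sq_eq_mul Fin.rev_involutive hgal h' hb hac hac' hbc hbc'))
  · exact Fin.rev_ne_self_of_two_mul b
      (hinj (eq_partner_of_sq_eq_mul Fin.rev_involutive hgal h hc hab hab' hbc.symm hcb))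

/-- With the hypotheses of the Frobenius-eigenvalues lemma, for any three distinct
eigenvalues `λ = μ a`, `ν₁ = μ b`, `ν₂ = μ c` one has `λ² ≠ ν₁ν₂`. -/
theorem frobenius_eigenvalues_no_square_relation
    (g : ℕ) (hg : 3 ≤ g) (q : ℕ) (hq : IsPrimePow q)
    (μ : Fin (2*g) → ℂ)
    (hinj : Function.Injective μ)
    (halg : ∀ i, IsAlgebraic ℚ (μ i))
    (habs : ∀ i, ‖μ i‖ = Real.sqrt q)
    (hpair : ∀ i, μ i * μ (Fin.rev i) = (q : ℂ))
    (hgal : ∀ π : Equiv.Perm (Fin (2*g)), (∀ i, π (Fin.rev i) = Fin.rev (π i)) →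
      ∀ P : MvPolynomial (Fin (2*g)) ℚ,
        MvPolynomial.aeval μ P = 0 → MvPolynomial.aeval (μ ∘ π) P = 0)
    (a b c : Fin (2*g)) (hab : a ≠ b) (hac : a ≠ c) (hbc : b ≠ c) :
    μ a ^ 2 ≠ μ b * μ c :=
  frobenius_eigenvalues_no_square_relation_general g q μ hinj hpair hgal a b c hab hac hbc
end

section
/- Let ℓ be an odd prime, n a positive integer, h an element of the group of orthogonal similitudes CGO_{2n}(𝔽_ℓ) with multiplier κ (so hᵗMh = κM for the defining symmetric matrix M). Then the map ν ↦ κ/ν is an involution of the multiset of eigenvalues of h in 𝔽̄_ℓ, and there exist λ ∈ 𝔽̄_ℓˣ with λ² = κ, an integer k ∈ {n−1, n}, and ξ₁,…,ξ_k ∈ 𝔽̄_ℓˣ such that the eigenvalues of h are either {λ, −λ, λξ₁,…,λξ_k, λξ₁⁻¹,…,λξ_k⁻¹} (if k = n−1) or {λξ₁,…,λξ_n, λξ₁⁻¹,…,λξ_n⁻¹} (if k = n). -/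
/-!
If `hᵀ M h = κ M` with `M` invertible, then `h` is conjugate (by `M`) to `κ (hᵀ)⁻¹`, whose
eigenvalues are the `κ / ν`; so the eigenvalue multiset is stable under `ν ↦ κ / ν`. Dividing by a
square root `λ` of `κ` turns this into stability under inversion. Eigenvalues other than `±λ` then
pair off as `λξ, λξ⁻¹`, and since there are `2n` eigenvalues in all, `λ` and `-λ` occur with
multiplicities of the same parity: either they pair off too (`ξ = ±1`), or one copy of each is
left over.
-/

open Polynomial

namespace Multiset

theorem exists_fin_univ_map_eq {α : Type*} {k : ℕ} {u : Multiset α} (hu : card u = k) :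
    ∃ ξ : Fin k → α, (Finset.univ : Finset (Fin k)).val.map ξ = u := by
  obtain rfl : u.toList.length = k := by simpa using hu
  exact ⟨u.toList.get, by rw [Fin.univ_val_map, List.ofFn_get, coe_toList]⟩

variable {α : Type*} [DecidableEq α]

theorem exists_eq_add_map_add_filter_fixed {σ : α → α} (hσ : Function.Involutive σ)
    {t : Multiset α} (ht : t.map σ = t) :
    ∃ u, t = u + u.map σ + t.filter (fun x => σ x = x) := by
  induction t using strongInductionOn with
  | ih t ih =>
    by_cases hmoved : ∃ a ∈ t, σ a ≠ a
    · obtain ⟨a, ha, hσa⟩ := hmoved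
      have hσa_mem : σ a ∈ t.erase a := (mem_erase_of_ne hσa).mpr (ht ▸ mem_map_of_mem σ ha)
      set t' := (t.erase a).erase (σ a)
      have ht_eq : t = a ::ₘ σ a ::ₘ t' := by rw [cons_erase hσa_mem, cons_erase ha]
      have ht' : t'.map σ = t' := by
        rw [map_erase _ hσ.injective, map_erase _ hσ.injective, ht, hσ a, erase_comm]
      obtain ⟨u, hu⟩ := ih t' (ht_eq ▸ (lt_cons_self _ _).trans (lt_cons_self _ _)) ht'
      refine ⟨a ::ₘ u, ?_⟩
      have hσσa : σ (σ a) ≠ σ a := by rw [hσ a]; exact hσa.symm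
      rw [ht_eq, filter_cons_of_neg (p := fun x => σ x = x) _ hσa,
        filter_cons_of_neg (p := fun x => σ x = x) _ hσσa]
      conv_lhs => rw [hu]
      simp only [map_cons, cons_add, add_cons]
      exact cons_swap _ _ _
    · push Not at hmoved
      exact ⟨0, by simp [filter_eq_self.mpr hmoved]⟩

theorem exists_le_eq_add_self_or_eq_cons_cons_add_self {a b : α} {f : Multiset α}
    (hf : ∀ x ∈ f, x = a ∨ x = b) (he : Even (card f)) :
    ∃ v ≤ f, f = v + v ∨ f = a ::ₘ b ::ₘ (v + v) := by
  -- `a = b` is allowed (as `1 = -1` in characteristic 2), hence `q` counts the elements `≠ a`.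
  set p := count a f
  set q := card (f.filter (· ≠ a))
  have hpq : f = replicate p a + replicate q b := by
    conv_lhs => rw [← filter_add_not (· = a) f]
    refine congrArg₂ (· + ·) (filter_eq' f a) (eq_replicate.mpr ⟨rfl, fun x hx => ?_⟩)
    obtain ⟨hxf, hxa⟩ := mem_filter.mp hx
    exact (hf x hxf).resolve_left hxa
  have hcard : card f = p + q := by rw [hpq]; simp
  rcases Nat.even_or_odd p with ⟨r, hr⟩ | ⟨r, hr⟩
  · obtain ⟨r', hr'⟩ : Even q := (Nat.even_add.mp (hcard ▸ he)).mp ⟨r, hr⟩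
    have hv : f = replicate r a + replicate r' b + (replicate r a + replicate r' b) := by
      rw [hpq, hr, hr', replicate_add, replicate_add]; abel
    exact ⟨_, hv ▸ le_add_right _ _, Or.inl hv⟩
  · obtain ⟨r', hr'⟩ : Odd q := Nat.not_even_iff_odd.mp fun hq =>
      Nat.not_even_iff_odd.mpr ⟨r, hr⟩ ((Nat.even_add.mp (hcard ▸ he)).mpr hq)
    have hv : f = a ::ₘ b ::ₘ
        (replicate r a + replicate r' b + (replicate r a + replicate r' b)) := by
      rw [hpq, hr, hr', two_mul, two_mul, replicate_succ, replicate_succ, replicate_add,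
        replicate_add]
      simp only [← singleton_add]; abel
    exact ⟨_, hv ▸ (le_add_right _ _).trans ((le_cons_self _ _).trans (le_cons_self _ _)),
      Or.inr hv⟩

theorem exists_eq_add_map_or_eq_cons_cons_add_map {σ : α → α} (hσ : Function.Involutive σ)
    {a b : α} (hfix : ∀ x, σ x = x ↔ x = a ∨ x = b) {t : Multiset α} (ht : t.map σ = t)
    (he : Even (card t)) : ∃ u, t = u + u.map σ ∨ t = a ::ₘ b ::ₘ (u + u.map σ) := by
  obtain ⟨u, hu⟩ := exists_eq_add_map_add_filter_fixed hσ ht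
  set f := t.filter (fun x => σ x = x)
  have hf : ∀ x ∈ f, x = a ∨ x = b := fun x hx => (hfix x).mp (mem_filter.mp hx).2
  have hfe : Even (card f) := by
    have hcard : card t = card u + card u + card f := by rw [hu]; simp
    exact (Nat.even_add.mp (hcard ▸ he)).mp ⟨card u, rfl⟩
  obtain ⟨v, hvf, hv⟩ := exists_le_eq_add_self_or_eq_cons_cons_add_self hf hfe
  have hσv : v.map σ = v :=
    (map_congr rfl fun x hx => (mem_filter.mp (mem_of_le hvf hx)).2).trans (map_id' v)
  refine ⟨u + v, hv.imp (fun h => ?_) (fun h => ?_)⟩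
  · rw [hu, h, map_add, hσv]; abel
  · rw [hu, h, map_add, hσv]; simp only [← singleton_add]; abel

theorem exists_eq_map_mul_add_map_mul_inv {K : Type*} [Field K] [IsAlgClosed K] {n : ℕ}
    {c : K} (hc : c ≠ 0) {s : Multiset K} (hs0 : (0 : K) ∉ s) (hs : s.map (c / ·) = s)
    (hcard : card s = 2 * n) :
    ∃ lam : Kˣ, (lam : K) ^ 2 = c ∧
      ((∃ ξ : Fin (n - 1) → Kˣ,
          s = (lam : K) ::ₘ (-(lam : K)) ::ₘ
            ((Finset.univ : Finset (Fin (n - 1))).val.map (fun i => (lam : K) * (ξ i : K)) +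
              (Finset.univ : Finset (Fin (n - 1))).val.map
                (fun i => (lam : K) * (((ξ i)⁻¹ : Kˣ) : K)))) ∨
        (∃ ξ : Fin n → Kˣ,
          s = (Finset.univ : Finset (Fin n)).val.map (fun i => (lam : K) * (ξ i : K)) +
            (Finset.univ : Finset (Fin n)).val.map
              (fun i => (lam : K) * (((ξ i)⁻¹ : Kˣ) : K)))) := by
  classical
  obtain ⟨lam, hlam⟩ := IsAlgClosed.exists_pow_nat_eq c two_pos
  have hlam0 : lam ≠ 0 := by rintro rfl; exact hc (by simpa using hlam.symm)
  set lamU := Units.mk0 lam hlam0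
  lift s to Multiset Kˣ using fun x hx => (ne_of_mem_of_not_mem hx hs0).isUnit
  obtain ⟨t, rfl⟩ : ∃ t : Multiset Kˣ, s = t.map (lamU * ·) :=
    ⟨s.map (lamU⁻¹ * ·), by simp [map_map]⟩
  have hscale : Function.Injective fun x : Kˣ => ((lamU * x : Kˣ) : K) :=
    Units.val_injective.comp (mul_right_injective lamU)
  have ht : t.map (·⁻¹) = t := by
    refine map_injective hscale ?_
    simp only [map_map, Function.comp_def] at hs ⊢
    rw [← hs]
    refine map_congr rfl fun x _ => ?_
    simp only [lamU, Units.val_mul, Units.val_inv_eq_inv_val, Units.val_mk0, ← hlam]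
    field_simp
  have hcard_t : card t = 2 * n := by simpa using hcard
  refine ⟨lamU, hlam, ?_⟩
  obtain ⟨u, hu | hu⟩ := exists_eq_add_map_or_eq_cons_cons_add_map inv_involutive
    (fun x => Units.inv_eq_self_iff x) ht (hcard_t ▸ even_two_mul n)
  · obtain ⟨ξ, rfl⟩ := exists_fin_univ_map_eq (k := n) (u := u) (by
      rw [hu] at hcard_t; simp at hcard_t; omega)
    refine Or.inr ⟨ξ, ?_⟩
    rw [hu]
    simp [Function.comp_def, lamU]
  · obtain ⟨ξ, rfl⟩ := exists_fin_univ_map_eq (k := n - 1) (u := u) (by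
      rw [hu] at hcard_t; simp at hcard_t; omega)
    refine Or.inl ⟨ξ, ?_⟩
    rw [hu]
    simp [Function.comp_def, lamU]

end Multiset

namespace Matrix

section CommRing

variable {R n : Type*} [CommRing R] [Fintype n] [DecidableEq n]

theorem isUnit_det_of_transpose_mul_mul_eq_smul {M A : Matrix n n R} {c : R} (hM : IsUnit M.det)
    (hc : IsUnit c) (h : Aᵀ * M * A = c • M) : IsUnit A.det := by
  have hdet : A.det ^ 2 * M.det = c ^ Fintype.card n * M.det := by
    simpa [det_mul, det_smul, det_transpose, sq, mul_comm, mul_left_comm] using congrArg det h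
  have : IsUnit (A.det ^ 2 * M.det) := hdet ▸ (hc.pow _).mul hM
  exact (isUnit_pow_iff two_ne_zero).mp (isUnit_of_mul_isUnit_left this)

theorem charpoly_eq_charpoly_smul_inv_of_transpose_mul_mul_eq_smul {M A : Matrix n n R} {c : R}
    (hM : IsUnit M.det) (hA : IsUnit A.det) (h : Aᵀ * M * A = c • M) :
    A.charpoly = (c • A⁻¹).charpoly := by
  have hAt : IsUnit Aᵀ.det := by rwa [det_transpose]
  have hconj : A = M⁻¹ * (c • A⁻¹)ᵀ * M := calc
    A = M⁻¹ * ((Aᵀ)⁻¹ * (Aᵀ * M * A)) := by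
      rw [Matrix.mul_assoc, ← Matrix.mul_assoc (Aᵀ)⁻¹, nonsing_inv_mul _ hAt, Matrix.one_mul,
        ← Matrix.mul_assoc, nonsing_inv_mul _ hM, Matrix.one_mul]
    _ = M⁻¹ * (c • A⁻¹)ᵀ * M := by
      rw [h, transpose_smul, transpose_nonsing_inv, Matrix.mul_smul, Matrix.mul_assoc,
        Matrix.smul_mul]
  obtain ⟨U, rfl⟩ := (isUnit_iff_isUnit_det M).mpr hM
  conv_lhs => rw [hconj, charpoly_units_conj', charpoly_transpose]

end CommRing

section Field

variable {K n : Type*} [Field K] [Fintype n] [DecidableEq n]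

theorem zero_notMem_roots_charpoly (A : Matrix n n K) (hA : IsUnit A.det) :
    (0 : K) ∉ A.charpoly.roots := fun h =>
  (spectrum.zero_mem_iff K).mp (mem_spectrum_iff_isRoot_charpoly.mpr (isRoot_of_mem_roots h))
    ((isUnit_iff_isUnit_det A).mpr hA)

theorem card_roots_charpoly [IsAlgClosed K] (A : Matrix n n K) :
    Multiset.card A.charpoly.roots = Fintype.card n :=
  (splits_iff_card_roots.mp (IsAlgClosed.splits _)).trans (charpoly_natDegree_eq_dim A)

theorem roots_charpoly_smul_inv [IsAlgClosed K] (A : Matrix n n K) (hA : IsUnit A.det) (c : K) :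
    (c • A⁻¹).charpoly.roots = A.charpoly.roots.map (c / ·) := by
  set s := A.charpoly.roots
  have hsplit : A.charpoly.Splits := IsAlgClosed.splits _
  have hdet : A.det = s.prod := det_eq_prod_roots_charpoly A
  have hs0 : (0 : K) ∉ s := zero_notMem_roots_charpoly A hA
  have hcard : Multiset.card s = Fintype.card n := card_roots_charpoly A
  suffices (c • A⁻¹).charpoly = ((s.map (c / ·)).map (X - C ·)).prod by
    rw [this, roots_multiset_prod_X_sub_C]
  refine eq_of_infinite_eval_eq _ _ ((Set.infinite_univ.sdiff (Set.finite_singleton 0)).mono ?_)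
  rintro x ⟨-, hx : x ≠ 0⟩
  have hfactor : scalar n x - c • A⁻¹ = (-x) • A⁻¹ * (scalar n (c / x) - A) := by
    simp only [scalar_apply, ← smul_one_eq_diagonal, Matrix.smul_mul, Matrix.mul_sub,
      Matrix.mul_smul, Matrix.mul_one, nonsing_inv_mul _ hA, smul_smul]
    rw [show c / x * -x = -c by field_simp, neg_smul, neg_smul]
    abel
  have hroot : ∀ ν ∈ s, x - c / ν = -x * (c / x - ν) / ν := fun ν hν => by
    have : ν ≠ 0 := fun h => hs0 (h ▸ hν)
    field_simp; ring
  calc eval x (c • A⁻¹).charpoly = (-x) ^ Fintype.card n * A.det⁻¹ * eval (c / x) A.charpoly := by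
        rw [eval_charpoly, hfactor, det_mul, det_smul, det_nonsing_inv, eval_charpoly,
          Ring.inverse_eq_inv']
    _ = (-x) ^ Multiset.card s * (s.map (c / x - ·)).prod / s.prod := by
        rw [hsplit.eval_eq_prod_roots_of_monic A.charpoly_monic, hdet, hcard]; ring
    _ = (s.map (fun ν => x - c / ν)).prod := by
        rw [Multiset.map_congr rfl hroot, Multiset.prod_map_div, Multiset.prod_map_mul,
          Multiset.map_const', Multiset.prod_replicate, Multiset.map_id']
    _ = _ := by simp [eval_multiset_prod]

theorem roots_charpoly_map_div_eq_self_of_transpose_mul_mul_eq_smul [IsAlgClosed K]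
    {M A : Matrix n n K} {c : K} (hM : IsUnit M.det) (hc : c ≠ 0) (h : Aᵀ * M * A = c • M) :
    A.charpoly.roots.map (c / ·) = A.charpoly.roots := by
  have hA := isUnit_det_of_transpose_mul_mul_eq_smul hM hc.isUnit h
  rw [← roots_charpoly_smul_inv A hA c,
    ← charpoly_eq_charpoly_smul_inv_of_transpose_mul_mul_eq_smul hM hA h]

end Field

end Matrix

open Matrix

theorem cgo_even_eigenvalues_general (ℓ : ℕ) [Fact (Nat.Prime ℓ)]
    (n : ℕ)
    (M h : Matrix (Fin (2 * n)) (Fin (2 * n)) (ZMod ℓ))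
    (hMinv : IsUnit M.det)
    (κ : (ZMod ℓ)ˣ)
    (hsim : hᵀ * M * h = ((κ : ZMod ℓ)) • M) :
    (Multiset.map
        (fun ν => algebraMap (ZMod ℓ) (AlgebraicClosure (ZMod ℓ)) (κ : ZMod ℓ) / ν)
        (h.map (algebraMap (ZMod ℓ) (AlgebraicClosure (ZMod ℓ)))).charpoly.roots =
      (h.map (algebraMap (ZMod ℓ) (AlgebraicClosure (ZMod ℓ)))).charpoly.roots) ∧
    ∃ lam : (AlgebraicClosure (ZMod ℓ))ˣ,
      (lam : AlgebraicClosure (ZMod ℓ)) ^ 2 =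
        algebraMap (ZMod ℓ) (AlgebraicClosure (ZMod ℓ)) (κ : ZMod ℓ) ∧
      ((∃ ξ : Fin (n - 1) → (AlgebraicClosure (ZMod ℓ))ˣ,
          (h.map (algebraMap (ZMod ℓ) (AlgebraicClosure (ZMod ℓ)))).charpoly.roots =
            (lam : AlgebraicClosure (ZMod ℓ)) ::ₘ (-(lam : AlgebraicClosure (ZMod ℓ))) ::ₘ
              ((Multiset.map
                  (fun i => (lam : AlgebraicClosure (ZMod ℓ)) *
                    ((ξ i : (AlgebraicClosure (ZMod ℓ))ˣ) : AlgebraicClosure (ZMod ℓ)))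
                  (Finset.univ : Finset (Fin (n - 1))).val) +
                Multiset.map
                  (fun i => (lam : AlgebraicClosure (ZMod ℓ)) *
                    (((ξ i)⁻¹ : (AlgebraicClosure (ZMod ℓ))ˣ) : AlgebraicClosure (ZMod ℓ)))
                  (Finset.univ : Finset (Fin (n - 1))).val)) ∨
        (∃ ξ : Fin n → (AlgebraicClosure (ZMod ℓ))ˣ,
          (h.map (algebraMap (ZMod ℓ) (AlgebraicClosure (ZMod ℓ)))).charpoly.roots =
            (Multiset.map
                (fun i => (lam : AlgebraicClosure (ZMod ℓ)) *
                  ((ξ i : (AlgebraicClosure (ZMod ℓ))ˣ) : AlgebraicClosure (ZMod ℓ)))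
                (Finset.univ : Finset (Fin n)).val) +
              Multiset.map
                (fun i => (lam : AlgebraicClosure (ZMod ℓ)) *
                  (((ξ i)⁻¹ : (AlgebraicClosure (ZMod ℓ))ˣ) : AlgebraicClosure (ZMod ℓ)))
                (Finset.univ : Finset (Fin n)).val)) := by
  set f := algebraMap (ZMod ℓ) (AlgebraicClosure (ZMod ℓ))
  have hc : IsUnit (f κ) := κ.isUnit.map f
  have hM : IsUnit (M.map f).det := by
    rw [← RingHom.mapMatrix_apply, ← RingHom.map_det]; exact hMinv.map f
  have hsim' : (h.map f)ᵀ * M.map f * h.map f = f κ • M.map f := by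
    rw [← transpose_map, ← Matrix.map_mul, ← Matrix.map_mul, hsim, map_smul' _ _ _ (map_mul f)]
  have hA := isUnit_det_of_transpose_mul_mul_eq_smul hM hc hsim'
  have hinv := roots_charpoly_map_div_eq_self_of_transpose_mul_mul_eq_smul hM hc.ne_zero hsim'
  exact ⟨hinv, Multiset.exists_eq_map_mul_add_map_mul_inv hc.ne_zero
    (zero_notMem_roots_charpoly _ hA) hinv (by simp [card_roots_charpoly])⟩

/-- Eigenvalues of an orthogonal similitude.  Let `ℓ` be an odd prime, `M` an invertible
symmetric matrix over `𝔽_ℓ` of size `2n`, and `h ∈ CGO_{2n}(𝔽_ℓ)` with multiplier `κ`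
(so `hᵀMh = κM`).  Then `ν ↦ κ/ν` is an involution of the multiset of eigenvalues of `h`
(in `𝔽̄_ℓ`), and there are `λ` with `λ² = κ`, `k ∈ {n−1, n}` and `ξ₁, …, ξ_k` such that the
eigenvalues of `h` are `{λ, −λ, λξ₁, …, λξ_k, λξ₁⁻¹, …, λξ_k⁻¹}` (if `k = n−1`) or
`{λξ₁, …, λξ_n, λξ₁⁻¹, …, λξ_n⁻¹}` (if `k = n`). -/
theorem cgo_even_eigenvalues (ℓ : ℕ) [Fact (Nat.Prime ℓ)] (hodd : ℓ ≠ 2)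
    (n : ℕ) (hn : 1 ≤ n)
    (M h : Matrix (Fin (2 * n)) (Fin (2 * n)) (ZMod ℓ))
    (hMsymm : Mᵀ = M) (hMinv : IsUnit M.det)
    (κ : (ZMod ℓ)ˣ)
    (hsim : hᵀ * M * h = ((κ : ZMod ℓ)) • M) :
    (Multiset.map
        (fun ν => algebraMap (ZMod ℓ) (AlgebraicClosure (ZMod ℓ)) (κ : ZMod ℓ) / ν)
        (h.map (algebraMap (ZMod ℓ) (AlgebraicClosure (ZMod ℓ)))).charpoly.roots =
      (h.map (algebraMap (ZMod ℓ) (AlgebraicClosure (ZMod ℓ)))).charpoly.roots) ∧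
    ∃ lam : (AlgebraicClosure (ZMod ℓ))ˣ,
      (lam : AlgebraicClosure (ZMod ℓ)) ^ 2 =
        algebraMap (ZMod ℓ) (AlgebraicClosure (ZMod ℓ)) (κ : ZMod ℓ) ∧
      ((∃ ξ : Fin (n - 1) → (AlgebraicClosure (ZMod ℓ))ˣ,
          (h.map (algebraMap (ZMod ℓ) (AlgebraicClosure (ZMod ℓ)))).charpoly.roots =
            (lam : AlgebraicClosure (ZMod ℓ)) ::ₘ (-(lam : AlgebraicClosure (ZMod ℓ))) ::ₘ
              ((Multiset.map
                  (fun i => (lam : AlgebraicClosure (ZMod ℓ)) *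
                    ((ξ i : (AlgebraicClosure (ZMod ℓ))ˣ) : AlgebraicClosure (ZMod ℓ)))
                  (Finset.univ : Finset (Fin (n - 1))).val) +
                Multiset.map
                  (fun i => (lam : AlgebraicClosure (ZMod ℓ)) *
                    (((ξ i)⁻¹ : (AlgebraicClosure (ZMod ℓ))ˣ) : AlgebraicClosure (ZMod ℓ)))
                  (Finset.univ : Finset (Fin (n - 1))).val)) ∨
        (∃ ξ : Fin n → (AlgebraicClosure (ZMod ℓ))ˣ,
          (h.map (algebraMap (ZMod ℓ) (AlgebraicClosure (ZMod ℓ)))).charpoly.roots =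
            (Multiset.map
                (fun i => (lam : AlgebraicClosure (ZMod ℓ)) *
                  ((ξ i : (AlgebraicClosure (ZMod ℓ))ˣ) : AlgebraicClosure (ZMod ℓ)))
                (Finset.univ : Finset (Fin n)).val) +
              Multiset.map
                (fun i => (lam : AlgebraicClosure (ZMod ℓ)) *
                  (((ξ i)⁻¹ : (AlgebraicClosure (ZMod ℓ))ˣ) : AlgebraicClosure (ZMod ℓ)))
                (Finset.univ : Finset (Fin n)).val)) :=
  cgo_even_eigenvalues_general ℓ n M h hMinv κ hsim
end

section
/- Let p be a prime and λ₁, λ₂, λ₃ be algebraic integers, each of degree exactly 2 over ℚ and of absolute value √p under every embedding into ℂ. Assume: (i) tr(λ_i) ≠ 0 for i = 1,2,3; (ii) the multiplicative subgroup of ℚ̄ˣ generated by λ₁, λ₂, λ₃ is torsion-free. If λ₂² = λ₁λ₃, then λ₁ = λ₂ = λ₃. -/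
/-!
Put `z = λ₀ / λ₁`. All `λᵢ` have norm `p`, so `z` lies on the unit circle and `λ₂ = z̄ λ₁`;
hence `λ₀ + λ₂ = w λ₁` with `w = z + z̄` real. Adding the conjugate relation gives
`w · tr λ₁ = tr λ₀ + tr λ₂`, so `w` is rational; here `tr λᵢ = λᵢ + λ̄ᵢ` because a real `λᵢ`
would be `±√p`, of trace zero. Then `p w² = |λ₀ + λ₂|²` is a rational algebraic integer,
hence an integer, and since `p` is squarefree, `w ∈ ℤ`. As `|w| ≤ 2`, `z` is a root of
`X² - wX + 1`, hence a 12th root of unity, and torsion-freeness forces `z = 1`.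
-/

open Polynomial ComplexConjugate

theorem Polynomial.Monic.add_eq_neg_coeff_one_of_natDegree_eq_two {K L : Type*} [Field K]
    [Field L] [Algebra K L] {P : K[X]} (hP : P.Monic) (hdeg : P.natDegree = 2) {x y : L}
    (hxy : x ≠ y) (hx : aeval x P = 0) (hy : aeval y P = 0) :
    x + y = -algebraMap K L (P.coeff 1) := by
  have hexp (t : L) :
      aeval t P = t ^ 2 + algebraMap K L (P.coeff 1) * t + algebraMap K L (P.coeff 0) := by
    conv_lhs => rw [hP.as_sum, hdeg]
    simp only [Finset.sum_range_succ, Finset.range_one, Finset.sum_singleton, pow_zero, mul_one,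
      pow_one, map_add, map_pow, aeval_X, aeval_C, map_mul]
    ring
  rw [hexp] at hx hy
  have : (x - y) * (x + y + algebraMap K L (P.coeff 1)) = 0 := by linear_combination hx - hy
  linear_combination (mul_eq_zero.mp this).resolve_left (sub_ne_zero.mpr hxy)

theorem minpoly.coeff_one_eq_zero_of_sq_eq_algebraMap {K A : Type*} [Field K] [Ring A]
    [Algebra K A] {x : A} {q : K} (hx : x ^ 2 = algebraMap K A q)
    (hdeg : (minpoly K x).natDegree = 2) : (minpoly K x).coeff 1 = 0 := by
  have hint : IsIntegral K x := minpoly.ne_zero_iff.mp fun h => by simp [h] at hdeg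
  have hdvd : minpoly K x ∣ X ^ 2 - C q := minpoly.dvd K x (by simp [hx])
  rw [← eq_of_monic_of_dvd_of_natDegree_le (minpoly.monic hint)
    (monic_X_pow_sub_C q two_ne_zero) hdvd (by rw [hdeg, natDegree_X_pow_sub_C])]
  simp

theorem Rat.den_eq_one_of_squarefree_mul_sq {n : ℤ} (hn : Squarefree n) {q : ℚ} {k : ℤ}
    (h : n * q ^ 2 = k) : q.den = 1 := by
  have hcop : IsCoprime ((q.den : ℤ) ^ 2) (q.num ^ 2) :=
    (Int.isCoprime_iff_gcd_eq_one.mpr (by simpa [Int.gcd, Nat.coprime_comm] using q.reduced)).pow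
  have hnum : n * q.num ^ 2 = k * q.den ^ 2 := by
    rw [← q.num_div_den] at h
    field_simp at h
    rw [mul_comm _ (k : ℚ)] at h
    exact_mod_cast h
  have hsq : (q.den : ℤ) * q.den ∣ n := by
    rw [← sq]
    exact hcop.dvd_of_dvd_mul_right ⟨k, by rw [hnum]; ring⟩
  have := Int.isUnit_iff_abs_eq.mp (hn _ hsq)
  rw [Nat.abs_cast] at this
  exact_mod_cast this

theorem pow_twelve_eq_one_of_sq_sub_mul_add_one {R : Type*} [CommRing R] [NoZeroDivisors R]
    {z : R} {m : ℤ} (hm : |m| ≤ 2) (h : z ^ 2 - m * z + 1 = 0) : z ^ 12 = 1 := by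
  obtain ⟨hml, hmr⟩ := abs_le.mp hm
  interval_cases m
  · have : z + 1 = 0 := pow_eq_zero_iff two_ne_zero |>.mp (by push_cast at h; linear_combination h)
    rw [eq_neg_of_add_eq_zero_left this]; norm_num
  · push_cast at h; linear_combination (z - 1) * (z ^ 9 + z ^ 6 + z ^ 3 + 1) * h
  · push_cast at h; linear_combination (z ^ 2 - 1) * (z ^ 8 + z ^ 4 + 1) * h
  · push_cast at h; linear_combination (z + 1) * (z ^ 3 - 1) * (z ^ 6 + 1) * h
  · have : z - 1 = 0 := pow_eq_zero_iff two_ne_zero |>.mp (by push_cast at h; linear_combination h)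
    rw [sub_eq_zero.mp this]; norm_num

namespace Complex

theorem mul_conj_eq_of_norm_eq_sqrt {x : ℂ} {r : ℝ} (hr : 0 ≤ r) (h : ‖x‖ = √r) :
    x * conj x = r := by
  rw [mul_conj, normSq_eq_norm_sq, h, Real.sq_sqrt hr]

theorem add_conj_eq_neg_minpoly_coeff_one {x : ℂ} (hdeg : (minpoly ℚ x).natDegree = 2)
    (hx : conj x ≠ x) : x + conj x = -((minpoly ℚ x).coeff 1 : ℂ) := by
  have hint : IsIntegral ℚ x := minpoly.ne_zero_iff.mp fun h => by simp [h] at hdeg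
  have hconj : aeval (conj x) (minpoly ℚ x) = 0 := by
    simpa using aeval_algHom_apply (conjAe.toAlgHom.restrictScalars ℚ) x (minpoly ℚ x)
  exact (minpoly.monic hint).add_eq_neg_coeff_one_of_natDegree_eq_two hdeg hx.symm
    (minpoly.aeval ℚ x) hconj

theorem exists_rat_ne_zero_add_conj_eq {x : ℂ} {r : ℚ} (hdeg : (minpoly ℚ x).natDegree = 2)
    (hr : x * conj x = r) (htr : (minpoly ℚ x).coeff 1 ≠ 0) :
    ∃ s : ℚ, s ≠ 0 ∧ x + conj x = s := by
  have hx : conj x ≠ x := by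
    intro hx
    rw [hx, ← sq] at hr
    exact htr (minpoly.coeff_one_eq_zero_of_sq_eq_algebraMap hr hdeg)
  exact ⟨_, neg_ne_zero.mpr htr, by rw [add_conj_eq_neg_minpoly_coeff_one hdeg hx, Rat.cast_neg]⟩

section

variable {a b c : ℂ} (hab : a * conj a = b * conj b) (hb : b ≠ 0)
include hab hb

theorem div_mul_conj_div_eq_one : a / b * conj (a / b) = 1 := by
  have : conj b ≠ 0 := (_root_.map_ne_zero _).mpr hb
  rw [map_div₀]
  field_simp
  linear_combination hab

theorem add_eq_add_conj_div_mul (h : b ^ 2 = a * c) : a + c = (a / b + conj (a / b)) * b := by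
  have ha : a ≠ 0 := by
    rintro rfl
    simp_all
  have hc : c * conj b = conj a * b :=
    mul_left_cancel₀ ha (by linear_combination -(conj b) * h - b * hab)
  have : conj b ≠ 0 := (_root_.map_ne_zero _).mpr hb
  rw [map_div₀]
  field_simp
  linear_combination hc

end

theorem add_conj_eq_ratCast_of_add_eq_mul {a b c z : ℂ} {s₀ s₁ s₂ : ℚ}
    (h : a + c = (z + conj z) * b) (ha : a + conj a = s₀) (hb : b + conj b = s₁)
    (hc : c + conj c = s₂) (hs₁ : s₁ ≠ 0) : z + conj z = ((s₀ + s₂) / s₁ : ℚ) := by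
  have hconj := congrArg conj h
  simp only [map_add, map_mul, conj_conj] at hconj
  rw [Rat.cast_div, Rat.cast_add, ← ha, ← hc, eq_div_iff (Rat.cast_ne_zero.mpr hs₁), ← hb]
  linear_combination -h - hconj

theorem exists_int_eq_of_isIntegral_ratCast_mul {x y : ℂ} {q : ℚ} {n : ℤ} (hn : Squarefree n)
    (hx : IsIntegral ℤ x) (hxy : x = q * y) (hy : y * conj y = n) : ∃ m : ℤ, q = m := by
  have hnorm : x * conj x = ((n * q ^ 2 : ℚ) : ℂ) := by
    rw [hxy, map_mul, map_ratCast]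
    push_cast
    linear_combination q ^ 2 * hy
  have hxc : IsIntegral ℤ (conj x) := hx.map (starRingEnd ℂ).toIntAlgHom
  obtain ⟨k, hk⟩ := (IsIntegral.exists_int_iff_exists_rat (hx.mul hxc)).mp ⟨_, hnorm⟩
  rw [hnorm] at hk
  exact ⟨q.num, ((Rat.den_eq_one_iff q).mp
    (Rat.den_eq_one_of_squarefree_mul_sq hn (by exact_mod_cast hk))).symm⟩

theorem pow_twelve_eq_one_of_mul_conj_eq_one {z : ℂ} {m : ℤ} (hz : z * conj z = 1)
    (hm : z + conj z = m) : z ^ 12 = 1 := by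
  refine pow_twelve_eq_one_of_sq_sub_mul_add_one ?_ (by linear_combination z * hm - hz)
  have hnorm : ‖z‖ = 1 := by
    have := congrArg re hz
    rw [mul_conj, normSq_eq_norm_sq] at this
    norm_cast at this
    exact (pow_eq_one_iff_of_nonneg (norm_nonneg z) two_ne_zero).mp this
  have hre : 2 * z.re = m := by
    exact_mod_cast (show ((2 * z.re : ℝ) : ℂ) = m by simpa [add_conj] using hm)
  have hle : |(m : ℝ)| ≤ 2 := by
    rw [← hre, abs_mul, abs_two]
    linarith [hnorm ▸ abs_re_le_norm z]
  exact_mod_cast hle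

end Complex

/-- Let `p` be a prime and `λ₀, λ₁, λ₂` algebraic integers of degree exactly `2` over `ℚ`,
all of whose conjugates (i.e. all roots of their minimal polynomials) have absolute value
`√p`.  Assume their traces are nonzero (equivalently, the degree-one coefficients of their
minimal polynomials are nonzero) and that the multiplicative subgroup of `ℂˣ` they generate
is torsion-free.  If `λ₁² = λ₀λ₂` then `λ₀ = λ₁ = λ₂`. -/
theorem weil_numbers_square_relation (p : ℕ) (hp : p.Prime)
    (lam : Fin 3 → ℂ)
    (hint : ∀ i, IsIntegral ℤ (lam i))
    (hdeg : ∀ i, (minpoly ℚ (lam i)).natDegree = 2)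
    (habs : ∀ i, ∀ z : ℂ, Polynomial.aeval z (minpoly ℚ (lam i)) = 0 →
      ‖z‖ = Real.sqrt p)
    (htr : ∀ i, (minpoly ℚ (lam i)).coeff 1 ≠ 0)
    (htf : ∀ z : ℂ, (∃ m : Fin 3 → ℤ, z = ∏ i, lam i ^ m i) →
      ∀ k : ℕ, 0 < k → z ^ k = 1 → z = 1)
    (hrel : lam 1 ^ 2 = lam 0 * lam 2) :
    lam 0 = lam 1 ∧ lam 1 = lam 2 := by
  have hnorm (i : Fin 3) : lam i * conj (lam i) = p := by
    simpa using Complex.mul_conj_eq_of_norm_eq_sqrt p.cast_nonneg (habs i _ (minpoly.aeval ℚ _))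
  choose s hs0 hs using fun i => Complex.exists_rat_ne_zero_add_conj_eq (r := p) (hdeg i)
    (by exact_mod_cast hnorm i) (htr i)
  have hlam1 : lam 1 ≠ 0 := fun h => hp.ne_zero (by simpa [h, eq_comm] using hnorm 1)
  have hnorm01 := (hnorm 0).trans (hnorm 1).symm
  set z := lam 0 / lam 1 with hz01
  have hz : z * conj z = 1 := Complex.div_mul_conj_div_eq_one hnorm01 hlam1
  have hsum : lam 0 + lam 2 = (z + conj z) * lam 1 :=
    Complex.add_eq_add_conj_div_mul hnorm01 hlam1 hrel
  clear_value z
  have hq := Complex.add_conj_eq_ratCast_of_add_eq_mul hsum (hs 0) (hs 1) (hs 2) (hs0 1)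
  obtain ⟨m, hm⟩ := Complex.exists_int_eq_of_isIntegral_ratCast_mul
    (Int.squarefree_natCast.mpr (Irreducible.squarefree hp)) ((hint 0).add (hint 2))
    (hq ▸ hsum) (by exact_mod_cast hnorm 1)
  have hz1 : z = 1 := htf z ⟨![1, -1, 0], by simp [Fin.prod_univ_three, hz01, div_eq_mul_inv]⟩ 12
    (by norm_num) (Complex.pow_twelve_eq_one_of_mul_conj_eq_one hz (by rw [hq, hm]; norm_cast))
  have h01 : lam 0 = lam 1 := (div_eq_one_iff_eq hlam1).mp (hz01 ▸ hz1)
  refine ⟨h01, mul_left_cancel₀ hlam1 ?_⟩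
  rw [← sq, hrel, h01]
end

section
/- Let N ≥ 3 be an integer and let μ₁,…,μ_{2g} be algebraic integers each congruent to 1 modulo N (i.e., (μ_i − 1)/N is an algebraic integer for all i). Then the multiplicative subgroup of ℚ̄ˣ generated by μ₁,…,μ_{2g} contains no nontrivial root of unity. -/
open scoped BigOperators

open Finset

/-!
The elements `x` with `x` and `(x - 1) / N` algebraic integers form a multiplicative monoid, and
a quotient of two of its members that is itself integral (such as a root of unity) lies in it
again. So it suffices to show that a root of unity `ζ ≠ 1` with `(ζ - 1) / N` integral cannot
exist. If `ζ` has order `m = n + 1 ≥ 2`, then `∏_{1 ≤ j ≤ n} (1 - ζ ^ j) = m`, and dividing each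
factor by `N` exhibits the rational number `m / N ^ n` as an algebraic integer, hence an
integer; but `0 < m / N ^ n < 1` as soon as `N ≥ 3`.
-/

theorem one_add_lt_pow {N n : ℕ} (hN : 3 ≤ N) (hn : 1 ≤ n) : n + 1 < N ^ n := by
  have hB : 1 + n * 2 ≤ (3 : ℤ) ^ n := by
    simpa using one_add_mul_le_pow (show (-2 : ℤ) ≤ 2 by norm_num) n
  have hN' : 3 ^ n ≤ N ^ n := Nat.pow_le_pow_left hN n
  zify at hN' ⊢
  linarith

theorem not_isIntegral_succ_div_pow {N n : ℕ} (hN : 3 ≤ N) (hn : 1 ≤ n) :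
    ¬IsIntegral ℤ ((n + 1) / N ^ n : ℚ) := by
  intro hint
  obtain ⟨y, hy⟩ := IsIntegrallyClosed.isIntegral_iff.mp hint
  rw [algebraMap_int_eq, eq_intCast] at hy
  have hN₀ : (0 : ℚ) < N ^ n := by positivity
  have hpos : (0 : ℚ) < y := by rw [hy]; positivity
  have hlt : (y : ℚ) < 1 := by
    rw [hy, div_lt_one hN₀]
    exact_mod_cast one_add_lt_pow hN hn
  have : (0 : ℤ) < y ∧ y < 1 := ⟨by exact_mod_cast hpos, by exact_mod_cast hlt⟩
  omega

section CongrOne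

variable (K : Type*) [Field K]

def congrOneSubmonoid (N : K) : Submonoid K where
  carrier := {x | IsIntegral ℤ x ∧ IsIntegral ℤ ((x - 1) / N)}
  one_mem' := by simpa using ⟨isIntegral_one, isIntegral_zero⟩
  mul_mem' := by
    rintro x y ⟨hx, hx₁⟩ ⟨hy, hy₁⟩
    refine ⟨hx.mul hy, ?_⟩
    have h : (x * y - 1) / N = x * ((y - 1) / N) + (x - 1) / N := by
      rw [← mul_div_assoc, ← add_div]
      ring_nf
    rw [h]
    exact (hx.mul hy₁).add hx₁

variable {K}

theorem mem_congrOneSubmonoid_of_mul_mem {N x y : K} (hx : IsIntegral ℤ x)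
    (hy : y ∈ congrOneSubmonoid K N) (hxy : x * y ∈ congrOneSubmonoid K N) :
    x ∈ congrOneSubmonoid K N := by
  refine ⟨hx, ?_⟩
  have h : (x - 1) / N = (x * y - 1) / N - x * ((y - 1) / N) := by
    rw [← mul_div_assoc, div_sub_div_same]
    ring_nf
  rw [h]
  exact hxy.2.sub (hx.mul hy.2)

theorem eq_one_of_pow_eq_one_of_mem_congrOneSubmonoid [CharZero K] {N : ℕ} (hN : 3 ≤ N)
    {ζ : K} {k : ℕ} (hk : 0 < k) (hζk : ζ ^ k = 1) (hζ : ζ ∈ congrOneSubmonoid K N) :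
    ζ = 1 := by
  by_contra hζ₁
  obtain ⟨n, hm⟩ : ∃ n, orderOf ζ = n + 1 :=
    Nat.exists_eq_succ_of_ne_zero (orderOf_pos_iff.mpr (isOfFinOrder_iff_pow_eq_one.mpr
      ⟨k, hk, hζk⟩)).ne'
  have hn : 1 ≤ n := by
    by_contra! h
    exact hζ₁ (orderOf_eq_one_iff.mp (by omega))
  have hprim : IsPrimitiveRoot ζ (n + 1) := hm ▸ IsPrimitiveRoot.orderOf ζ
  have hprod : (-1) ^ n * ∏ j ∈ range n, (ζ ^ (j + 1) - 1) / N =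
      algebraMap ℚ K ((n + 1) / N ^ n) := by
    rw [prod_div_distrib, prod_const, card_range, ← mul_div_assoc,
      hprim.prod_pow_sub_one_eq_order, map_div₀]
    simp
  refine not_isIntegral_succ_div_pow hN hn ?_
  rw [← isIntegral_algebraMap_iff (algebraMap ℚ K).injective, ← hprod]
  exact (isIntegral_one.neg.pow n).mul
    (IsIntegral.prod _ fun j _ => ((congrOneSubmonoid K N).pow_mem hζ (j + 1)).2)

end CongrOne

theorem zpow_mul_pow_toNat_neg {G : Type*} [GroupWithZero G] {x : G} {n : ℤ} (h : x ^ n ≠ 0) :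
    x ^ n * x ^ (-n).toNat = x ^ n.toNat := by
  by_cases hx : x = 0
  · obtain rfl : n = 0 := by by_contra hn; exact h (by rw [hx, zero_zpow n hn])
    simp
  · rw [← zpow_natCast, ← zpow_natCast, ← zpow_add₀ hx]
    congr 1
    omega

/-- Let `N ≥ 3` and let `μ₁, …, μ_{2g}` be algebraic integers with each `(μᵢ − 1)/N` an
algebraic integer (i.e. `μᵢ ≡ 1 mod N`).  Then the multiplicative subgroup of `ℂˣ`
generated by the `μᵢ` contains no nontrivial root of unity. -/
theorem no_nontrivial_root_of_unity (N : ℕ) (hN : 3 ≤ N) (g : ℕ)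
    (μ : Fin (2 * g) → ℂ)
    (hint : ∀ i, IsIntegral ℤ (μ i))
    (hcong : ∀ i, IsIntegral ℤ ((μ i - 1) / (N : ℂ))) :
    ∀ z : ℂ, (∃ n : Fin (2 * g) → ℤ, z = ∏ i, μ i ^ n i) →
      ∀ k : ℕ, 0 < k → z ^ k = 1 → z = 1 := by
  rintro z ⟨n, rfl⟩ k hk hzk
  set S := congrOneSubmonoid ℂ (N : ℂ)
  have hpow (e : Fin (2 * g) → ℕ) : ∏ i, μ i ^ e i ∈ S :=
    S.prod_mem fun i _ => S.pow_mem ⟨hint i, hcong i⟩ (e i)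
  have hz₀ : ∏ i, μ i ^ n i ≠ 0 := by
    rintro h
    simp [h, zero_pow hk.ne'] at hzk
  have hsplit : (∏ i, μ i ^ n i) * ∏ i, μ i ^ (-n i).toNat = ∏ i, μ i ^ (n i).toNat := by
    rw [← prod_mul_distrib]
    exact prod_congr rfl fun i _ => zpow_mul_pow_toNat_neg (prod_ne_zero_iff.mp hz₀ i (mem_univ i))
  have hzint : IsIntegral ℤ (∏ i, μ i ^ n i) :=
    ⟨Polynomial.X ^ k - 1, Polynomial.monic_X_pow_sub_C 1 hk.ne', by simp [hzk]⟩
  exact eq_one_of_pow_eq_one_of_mem_congrOneSubmonoid hN hk hzk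
    (mem_congrOneSubmonoid_of_mul_mem hzint (hpow _) (hsplit ▸ hpow _))
end
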